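/- For every x ∈ D and every d ∈ ℤ_{≥0}, 𝔉(x_1,…,x_d)·𝔉(Tx) − 𝔉(x_2,…,x_d)·𝔉(x) = (∏_{k=1}^d x_k x_{k+1}) · 𝔉(T^{d+1} x). -/

import Mathlib

open scoped BigOperators

/-- Admissible index tuples: k₁ ≥ 1 and k_{i+1} ≥ k_i + 2. -/
def FAdm (m : ℕ) (k : Fin m → ℕ) : Prop :=
  (∀ i, 1 ≤ k i) ∧ ∀ i j : Fin m, (i : ℕ) + 1 = (j : ℕ) → k i + 2 ≤ k j

/-- The function 𝔉 given by the alternating multiple series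
`𝔉(x) = 1 + ∑_{m≥1} (-1)^m ∑_{k₁≥1, k_{i+1}≥k_i+2} x_{k₁}x_{k₁+1}⋯x_{k_m}x_{k_m+1}`;
the sequence is indexed so that `x k` is `x_k` for `k ≥ 1`. -/
noncomputable def Fcal (x : ℕ → ℂ) : ℂ :=
  ∑' p : (Σ m : ℕ, { k : Fin m → ℕ // FAdm m k }),
    (-1 : ℂ) ^ p.1 * ∏ i, x (p.2.1 i) * x (p.2.1 i + 1)

/-- 𝔉 of the finite sequence (x_1, …, x_n): x truncated after position n, padded by zeros. -/
noncomputable def FcalFin (n : ℕ) (x : ℕ → ℂ) : ℂ :=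
  Fcal fun k => if k ≤ n then x k else 0

/-- 𝔉 of the finite segment (x_a, …, x_b); it equals 1 when the segment is empty (b = a-1)
and, by convention, 0 when b = a-2 (a segment of "length -1"). -/
noncomputable def Fseg (x : ℕ → ℂ) (a b : ℕ) : ℂ :=
  if b + 1 < a then 0 else FcalFin (b + 1 - a) (fun j => x (j + a - 1))

/-!
Splitting the admissible index tuples according to whether `k₁ = 1` gives the recurrence
`𝔉(x) = 𝔉(Tx) - x₁x₂ 𝔉(T²x)` for `x ∈ D`; absolute convergence comes from bounding the sum over
admissible tuples by the sum over finite sets `s` of `∏_{j ∈ s} |x_j x_{j+1}|`. The same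
recurrence holds for the finite segments `𝔉(x₁,…,x_d)`, uniformly in `d` thanks to the convention
`𝔉(x₂,…,x₀) = 0`. Substituting both recurrences, the left-hand side for `(d + 1, x)` equals `x₁x₂`
times the left-hand side for `(d, Tx)`, and the identity follows by induction on `d`.
-/

lemma Finset.prod_Icc_one_succ {M : Type*} [CommMonoid M] (f : ℕ → M) (n : ℕ) :
    ∏ k ∈ Finset.Icc 1 (n + 1), f k = f 1 * ∏ k ∈ Finset.Icc 1 n, f (k + 1) := by
  rw [← Finset.Ico_add_one_right_eq_Icc, ← Finset.Ico_add_one_right_eq_Icc,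
    Finset.prod_eq_prod_Ico_succ_bot (by omega), Finset.prod_Ico_add']

namespace FAdm

variable {m : ℕ} {k : Fin m → ℕ}

lemma add_two_le (h : FAdm m k) {i j : Fin m} (hij : i < j) : k i + 2 ≤ k j := by
  obtain ⟨j, hj⟩ := j
  rw [Fin.lt_def] at hij
  induction j with
  | zero => exact absurd hij (Nat.not_lt_zero _)
  | succ j ih =>
    have hstep := h.2 ⟨j, by omega⟩ ⟨j + 1, hj⟩ rfl
    rcases Nat.lt_succ_iff_lt_or_eq.1 hij with hlt | heq
    · have := ih (by omega) hlt; omega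
    · rwa [show i = ⟨j, by omega⟩ from Fin.ext heq]

lemma strictMono (h : FAdm m k) : StrictMono k := fun _ _ hij => by
  have := h.add_two_le hij; omega

lemma add_one (h : FAdm m k) : FAdm m (fun i => k i + 1) :=
  ⟨fun _ => Nat.le_add_left 1 _, fun i j hij => by dsimp only; have := h.2 i j hij; omega⟩

lemma sub_one (h : FAdm m k) (h2 : ∀ i, 2 ≤ k i) : FAdm m (fun i => k i - 1) := by
  refine ⟨fun i => ?_, fun i j hij => ?_⟩ <;> dsimp only
  · have := h2 i; omega
  · have := h.2 i j hij; have := h2 i; omega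

lemma cons_one (h : FAdm m k) : FAdm (m + 1) (Fin.cons 1 fun i => k i + 2) := by
  refine ⟨Fin.cases le_rfl fun _ => by simp, fun i j hij => ?_⟩
  cases j using Fin.cases with
  | zero => simp at hij
  | succ j =>
    cases i using Fin.cases with
    | zero => have := h.1 j; simp; omega
    | succ i =>
      have := h.2 i j (by simpa using hij)
      simp only [Fin.cons_succ]; omega

lemma tail_sub_two {k : Fin (m + 1) → ℕ} (h : FAdm (m + 1) k) :
    FAdm m (fun i => k i.succ - 2) := by
  have h3 (i : Fin m) : 3 ≤ k i.succ := by
    have := h.add_two_le (Fin.succ_pos i); have := h.1 0; omega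
  refine ⟨fun i => ?_, fun i j hij => ?_⟩ <;> dsimp only
  · have := h3 i; omega
  · have := h.2 i.succ j.succ (by simpa using hij); have := h3 i; omega

end FAdm

abbrev FIndex : Type := Σ m : ℕ, { k : Fin m → ℕ // FAdm m k }

namespace FIndex

lemma mk_eq_mk {m : ℕ} {k k' : Fin m → ℕ} {h : FAdm m k} {h' : FAdm m k'} :
    (⟨m, k, h⟩ : FIndex) = ⟨m, k', h'⟩ ↔ k = k' := by
  simp

noncomputable def term (x : ℕ → ℂ) (p : FIndex) : ℂ :=
  (-1 : ℂ) ^ p.1 * ∏ i, x (p.2.1 i) * x (p.2.1 i + 1)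

def shift (p : FIndex) : FIndex := ⟨p.1, _, p.2.2.add_one⟩

def consOne (p : FIndex) : FIndex := ⟨p.1 + 1, _, p.2.2.cons_one⟩

lemma shift_injective : Function.Injective shift := by
  rintro ⟨m, k, hk⟩ ⟨m', k', hk'⟩ h
  obtain ⟨rfl, h⟩ := Sigma.mk.inj_iff.1 h
  simp only [heq_eq_eq, Subtype.mk.injEq, funext_iff, add_left_inj] at h
  exact mk_eq_mk.2 (funext h)

lemma consOne_injective : Function.Injective consOne := by
  rintro ⟨m, k, hk⟩ ⟨m', k', hk'⟩ h
  obtain ⟨hm, h⟩ := Sigma.mk.inj_iff.1 h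
  obtain rfl : m = m' := Nat.succ_injective hm
  simp only [heq_eq_eq, Subtype.mk.injEq, Fin.cons_inj, true_and] at h
  exact mk_eq_mk.2 (funext fun i => by simpa using congrFun h i)

lemma range_shift : Set.range shift = {p | ∀ i, 2 ≤ p.2.1 i} := by
  ext p
  refine ⟨?_, fun h => ?_⟩
  · rintro ⟨q, rfl⟩ i
    exact Nat.succ_le_succ (q.2.2.1 i)
  · obtain ⟨m, k, hk⟩ := p
    change ∀ i, 2 ≤ k i at h
    refine ⟨⟨m, _, hk.sub_one h⟩, mk_eq_mk.2 (funext fun i => ?_)⟩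
    have := h i; dsimp only; omega

lemma range_consOne : Set.range consOne = {p | ∀ i, 2 ≤ p.2.1 i}ᶜ := by
  ext p
  simp only [Set.mem_compl_iff, Set.mem_ofPred_eq, not_forall, not_le]
  constructor
  · rintro ⟨q, rfl⟩
    exact ⟨(0 : Fin (q.1 + 1)), by simp [consOne]⟩
  · obtain ⟨m, k, hk⟩ := p
    rintro ⟨i, hi : k i < 2⟩
    cases m with
    | zero => exact i.elim0
    | succ m =>
      have h0 : k 0 = 1 := by
        have := hk.strictMono.monotone (Fin.zero_le i); have := hk.1 0; omega
      refine ⟨⟨m, _, hk.tail_sub_two⟩, mk_eq_mk.2 (funext fun j => ?_)⟩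
      cases j using Fin.cases with
      | zero => exact h0.symm
      | succ j =>
        have := hk.add_two_le (Fin.succ_pos j)
        simp only [Fin.cons_succ]; omega

lemma term_shift (x : ℕ → ℂ) (p : FIndex) : (shift p).term x = p.term fun k => x (k + 1) := rfl

lemma term_consOne (x : ℕ → ℂ) (p : FIndex) :
    (consOne p).term x = -(x 1 * x 2) * p.term fun k => x (k + 2) := by
  obtain ⟨m, k, hk⟩ := p
  change (-1 : ℂ) ^ (m + 1) * ∏ i : Fin (m + 1), _ = _
  simp only [term, consOne, Fin.prod_univ_succ, Fin.cons_zero, Fin.cons_succ, pow_succ]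
  ring

def toFinset (p : FIndex) : Finset ℕ := Finset.univ.image p.2.1

lemma toFinset_injective : Function.Injective toFinset := by
  rintro ⟨m, k, hk⟩ ⟨m', k', hk'⟩ h
  have hcard (n : ℕ) (f : Fin n → ℕ) (hf : FAdm n f) : (Finset.univ.image f).card = n := by
    rw [Finset.card_image_of_injective _ hf.strictMono.injective, Finset.card_fin]
  obtain rfl : m = m' := by rw [← hcard m k hk, ← hcard m' k' hk']; exact congrArg Finset.card h
  refine mk_eq_mk.2 ((hk.strictMono.range_inj hk'.strictMono).1 ?_)
  simpa [toFinset, ← Finset.coe_inj] using h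

lemma norm_term (x : ℕ → ℂ) (p : FIndex) :
    ‖p.term x‖ = ∏ j ∈ p.toFinset, ‖x j * x (j + 1)‖ := by
  rw [toFinset, Finset.prod_image fun i _ j _ hij => p.2.2.strictMono.injective hij]
  simp [term, norm_prod]

lemma summable_norm_term {x : ℕ → ℂ} (hx : Summable fun j => ‖x j * x (j + 1)‖) :
    Summable fun p : FIndex => ‖p.term x‖ := by
  simp_rw [norm_term]
  exact (summable_finsetProd_of_summable_nonneg (fun _ => norm_nonneg _) hx).comp_injective
    toFinset_injective

lemma compl_range_shift : (Set.range shift)ᶜ = Set.range consOne := by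
  rw [range_shift, range_consOne]

end FIndex

lemma Fcal_eq_tsum (x : ℕ → ℂ) : Fcal x = ∑' p : FIndex, p.term x := rfl

lemma Fcal_eq_sub {x : ℕ → ℂ} (hx : Summable fun k => ‖x (k + 1) * x (k + 2)‖) :
    Fcal x = Fcal (fun k => x (k + 1)) - x 1 * x 2 * Fcal (fun k => x (k + 2)) := by
  have hs : Summable fun p : FIndex => p.term x :=
    (FIndex.summable_norm_term ((summable_nat_add_iff 1).1 hx)).of_norm
  rw [Fcal_eq_tsum,
    ← Summable.tsum_add_tsum_compl (s := Set.range FIndex.shift) (hs.subtype _) (hs.subtype _),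
    FIndex.compl_range_shift, tsum_range _ FIndex.shift_injective,
    tsum_range _ FIndex.consOne_injective]
  simp only [FIndex.term_shift, FIndex.term_consOne, tsum_mul_left, ← Fcal_eq_tsum]
  ring

lemma Fcal_eq_one {y : ℕ → ℂ} (hy : ∀ k, 1 ≤ k → y k * y (k + 1) = 0) : Fcal y = 1 := by
  rw [Fcal_eq_tsum, tsum_eq_single (⟨0, Fin.elim0, fun i => i.elim0, fun i => i.elim0⟩ : FIndex)]
  · simp [FIndex.term]
  · rintro ⟨_ | m, k, hk⟩ hne
    · exact absurd (FIndex.mk_eq_mk.2 (funext fun i => i.elim0)) hne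
    · exact mul_eq_zero_of_right _ (Finset.prod_eq_zero (Finset.mem_univ 0) (hy _ (hk.1 0)))

lemma FcalFin_succ_succ (x : ℕ → ℂ) (n : ℕ) :
    FcalFin (n + 2) x
      = FcalFin (n + 1) (fun k => x (k + 1)) - x 1 * x 2 * FcalFin n (fun k => x (k + 2)) := by
  have hs : Summable fun k => ‖(if k + 1 ≤ n + 2 then x (k + 1) else 0) *
      (if k + 2 ≤ n + 2 then x (k + 2) else 0)‖ :=
    summable_of_ne_finset_zero (s := Finset.range (n + 1)) fun k hk => by
      simp only [Finset.mem_range] at hk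
      simp [show ¬ k + 2 ≤ n + 2 by omega]
  have h := Fcal_eq_sub (x := fun k => if k ≤ n + 2 then x k else 0) hs
  simp only [Nat.add_le_add_iff_right, show 1 ≤ n + 2 by omega, show 2 ≤ n + 2 by omega,
    if_true] at h
  exact h

lemma Fseg_one (x : ℕ → ℂ) (d : ℕ) : Fseg x 1 d = FcalFin d x := if_neg (by omega)

lemma Fseg_two_succ (x : ℕ → ℂ) (d : ℕ) : Fseg x 2 (d + 1) = Fseg (fun k => x (k + 1)) 1 d :=
  (if_neg (by omega)).trans (Fseg_one _ d).symm

lemma FcalFin_eq_one {n : ℕ} (hn : n ≤ 1) (x : ℕ → ℂ) : FcalFin n x = 1 :=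
  Fcal_eq_one (y := fun k => if k ≤ n then x k else 0) fun k hk => by
    simp [show ¬ k + 1 ≤ n by omega]

lemma Fseg_one_zero (x : ℕ → ℂ) : Fseg x 1 0 = 1 := by
  rw [Fseg_one, FcalFin_eq_one zero_le_one]

lemma Fseg_two_zero (x : ℕ → ℂ) : Fseg x 2 0 = 0 := if_pos (by omega)

lemma Fseg_one_succ (x : ℕ → ℂ) (d : ℕ) :
    Fseg x 1 (d + 1)
      = Fseg (fun k => x (k + 1)) 1 d - x 1 * x 2 * Fseg (fun k => x (k + 1)) 2 d := by
  cases d with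
  | zero =>
    rw [Fseg_one_zero, Fseg_two_zero, Fseg_one, FcalFin_eq_one le_rfl, mul_zero, sub_zero]
  | succ d => rw [Fseg_one, Fseg_one, Fseg_two_succ, Fseg_one, FcalFin_succ_succ]

/-- For every x ∈ D and d ≥ 0:
𝔉(x₁,…,x_d) 𝔉(Tx) - 𝔉(x₂,…,x_d) 𝔉(x) = (∏_{k=1}^d x_k x_{k+1}) 𝔉(T^{d+1}x). -/
theorem stmt_5 (x : ℕ → ℂ) (hx : Summable fun k : ℕ => ‖x (k + 1) * x (k + 2)‖)
    (d : ℕ) :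
    Fseg x 1 d * Fcal (fun k => x (k + 1)) - Fseg x 2 d * Fcal x
      = (∏ k ∈ Finset.Icc 1 d, x k * x (k + 1)) * Fcal (fun k => x (k + d + 1)) := by
  induction d generalizing x with
  | zero => simp [Fseg_one_zero, Fseg_two_zero]
  | succ d ih =>
    have hTx := (summable_nat_add_iff (f := fun k => ‖x (k + 1) * x (k + 2)‖) 1).2 hx
    rw [Fseg_one_succ, Fseg_two_succ, Fcal_eq_sub hx, Finset.prod_Icc_one_succ]
    linear_combination (x 1 * x 2) * ih (fun k => x (k + 1)) hTx
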